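/- arXiv:2205.03527 — 3 statements merged into one kernel-verified Lean document; each statement's English description precedes it below -/
import Mathlib

section
/- For any ideal I ⊆ R, the set of antiderivatives admits a coordinate-free description: Δ(I) = { f ∈ I : δ(f) ∈ I for every ℂ-derivation δ of R }. In particular Δ(I) does not depend on the choice of the variables x₁,…,xₙ used to compute Tjurina ideals. -/
/-
Every derivation `δ` of `ℂ[[x₁,…,xₙ]]` satisfies the chain rule `δ f = ∑ δ(xᵢ) ∂f/∂xᵢ`: the
difference of the two sides is a derivation killing every `xᵢ`, hence every polynomial, and it
maps the ideal `(xᵢ^(dᵢ+1))ᵢ` into itself. Every series is a polynomial modulo that ideal, whose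
elements have no `x^d` term, so the difference has no `x^d` term for any `d`. Hence `T(f) ⊆ I` as
soon as `f ∈ I` and `δ f ∈ I` for all `δ`, and conversely, the `∂/∂xᵢ` being derivations.
-/

/-- The partial derivative `∂f/∂xⱼ` of a formal power series `f ∈ ℂ[[x₁,…,xₙ]]`,
defined coefficientwise. -/
noncomputable def pd {n : ℕ} (j : Fin n) (f : MvPowerSeries (Fin n) ℂ) :
    MvPowerSeries (Fin n) ℂ :=
  fun d => ((d j + 1 : ℕ) : ℂ) * MvPowerSeries.coeff (d + Finsupp.single j 1) f

/-- The Tjurina ideal `T(f) = (f, ∂f/∂x₁, …, ∂f/∂xₙ)`. -/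
noncomputable def Tj {n : ℕ} (f : MvPowerSeries (Fin n) ℂ) : Ideal (MvPowerSeries (Fin n) ℂ) :=
  Ideal.span ({f} ∪ Set.range fun j => pd j f)

/-- The set of antiderivatives `Δ(I) = {f : T(f) ⊆ I}`. -/
def Del {n : ℕ} (I : Ideal (MvPowerSeries (Fin n) ℂ)) : Set (MvPowerSeries (Fin n) ℂ) :=
  {f | Tj f ≤ I}

/-- The Tjurina ideal of an arbitrary set of power series (for an ideal `J`, applied to its
carrier this computes `T(J) = T(g₁) + … + T(g_q)` for any system of generators). -/
noncomputable def Tset {n : ℕ} (A : Set (MvPowerSeries (Fin n) ℂ)) :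
    Ideal (MvPowerSeries (Fin n) ℂ) :=
  Ideal.span (A ∪ {g | ∃ f ∈ A, ∃ j, g = pd j f})

/-- The maximal ideal `𝔪 = (x₁,…,xₙ)` of `ℂ[[x₁,…,xₙ]]`. -/
noncomputable def mm (n : ℕ) : Ideal (MvPowerSeries (Fin n) ℂ) :=
  Ideal.span (Set.range (MvPowerSeries.X : Fin n → MvPowerSeries (Fin n) ℂ))

theorem Derivation.sum_apply {ι R A M : Type*} [CommSemiring R] [CommSemiring A] [AddCommMonoid M]
    [Algebra R A] [Module A M] [Module R M] (s : Finset ι) (D : ι → Derivation R A M) (a : A) :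
    (∑ i ∈ s, D i) a = ∑ i ∈ s, D i a := by
  rw [← Derivation.coeFnAddMonoidHom_apply, map_sum, Finset.sum_apply]
  rfl

theorem Derivation.map_mem_span_of_forall_mem {R A : Type*} [CommSemiring R] [CommRing A]
    [Algebra R A] (D : Derivation R A A) {S : Set A} (hS : ∀ s ∈ S, D s ∈ Ideal.span S) {x : A}
    (hx : x ∈ Ideal.span S) : D x ∈ Ideal.span S := by
  induction hx using Submodule.span_induction with
  | mem s hs => exact hS s hs
  | zero => simp
  | add x y _ _ hx hy => simpa using add_mem hx hy
  | smul a x hx ih =>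
    rw [smul_eq_mul, D.leibniz, smul_eq_mul, smul_eq_mul]
    exact add_mem (Ideal.mul_mem_left _ a ih) (Ideal.mul_mem_right _ _ hx)

namespace MvPowerSeries

variable {σ R : Type*} [CommRing R]

theorem derivation_map_coe_eq_zero {D : Derivation R (MvPowerSeries σ R) (MvPowerSeries σ R)}
    (h : ∀ i, D (X i) = 0) (P : MvPolynomial σ R) : D (P : MvPowerSeries σ R) = 0 := by
  induction P using MvPolynomial.induction_on with
  | C a => rw [MvPolynomial.coe_C, c_eq_algebraMap, D.map_algebraMap]
  | add P Q hP hQ => rw [MvPolynomial.coe_add, map_add, hP, hQ, add_zero]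
  | mul_X P i hP =>
    rw [MvPolynomial.coe_mul, MvPolynomial.coe_X, D.leibniz, hP, h, smul_zero, smul_zero, add_zero]

theorem coeff_eq_zero_of_mem_span_X_pow [Fintype σ] {d : σ →₀ ℕ} {g : MvPowerSeries σ R}
    (hg : g ∈ Ideal.span (Set.range fun i => X i ^ (d i + 1))) : coeff d g = 0 := by
  obtain ⟨c, rfl⟩ := Ideal.mem_span_range_iff_exists_fun.mp hg
  rw [map_sum]
  exact Finset.sum_eq_zero fun i _ => X_pow_dvd_iff.mp (dvd_mul_left _ _) d (Nat.lt_succ_self _)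

theorem exists_sub_coe_mem_span_X_pow [Fintype σ] (f : MvPowerSeries σ R) (d : σ →₀ ℕ) :
    ∃ P : MvPolynomial σ R, f - P ∈ Ideal.span (Set.range fun i => X i ^ (d i + 1)) := by
  classical
  set J : Ideal (MvPowerSeries σ R) := Ideal.span (Set.range fun i => X i ^ (d i + 1))
  -- Peel off, one variable at a time, the terms of `f` whose exponent leaves the box `e ≤ d`.
  have peel : ∀ S : Finset σ, ∃ g ∈ J, ∀ e, coeff e (f - g) ≠ 0 → ∀ i ∈ S, e i ≤ d i := by
    intro S
    induction S using Finset.induction_on with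
    | empty => exact ⟨0, J.zero_mem, by simp⟩
    | insert i S _ ih =>
      obtain ⟨g, hgJ, hg⟩ := ih
      let h' : MvPowerSeries σ R := fun e => if e i ≤ d i then coeff e (f - g) else 0
      have hcoeff : ∀ e, coeff e h' = if e i ≤ d i then coeff e (f - g) else 0 := fun _ => rfl
      have hdvd : X i ^ (d i + 1) ∣ f - g - h' := X_pow_dvd_iff.mpr fun e he => by
        rw [map_sub, hcoeff, if_pos (Nat.lt_succ_iff.mp he), sub_self]
      refine ⟨g + (f - g - h'), add_mem hgJ (J.mem_of_dvd hdvd (Ideal.subset_span ⟨i, rfl⟩)), ?_⟩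
      intro e he j hj
      rw [show f - (g + (f - g - h')) = h' by abel, hcoeff] at he
      split_ifs at he with hei
      · rcases Finset.mem_insert.mp hj with rfl | hjS
        · exact hei
        · exact hg e he j hjS
      · exact absurd rfl he
  obtain ⟨g, hgJ, hg⟩ := peel Finset.univ
  refine ⟨trunc' R d (f - g), ?_⟩
  suffices f - g = trunc' R d (f - g) by rwa [← this, sub_sub_cancel]
  ext e
  rw [MvPolynomial.coeff_coe, coeff_trunc']
  split_ifs with hed
  · rfl
  · by_contra hne
    exact hed fun i => hg e hne i (Finset.mem_univ i)

theorem derivation_eq_zero_of_forall_X [Fintype σ]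
    {D : Derivation R (MvPowerSeries σ R) (MvPowerSeries σ R)} (h : ∀ i, D (X i) = 0) : D = 0 := by
  ext f d
  obtain ⟨P, hP⟩ := exists_sub_coe_mem_span_X_pow f d
  have hDX : ∀ s ∈ Set.range fun i => (X i : MvPowerSeries σ R) ^ (d i + 1),
      D s ∈ Ideal.span (Set.range fun i => X i ^ (d i + 1)) := by
    rintro _ ⟨i, rfl⟩
    rw [D.leibniz_pow, h, smul_zero, smul_zero]
    exact Ideal.zero_mem _
  calc coeff d (D f) = coeff d (D (f - P)) := by
        rw [map_sub, derivation_map_coe_eq_zero h, sub_zero]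
    _ = 0 := coeff_eq_zero_of_mem_span_X_pow (D.map_mem_span_of_forall_mem hDX hP)

theorem derivation_ext [Fintype σ] {D₁ D₂ : Derivation R (MvPowerSeries σ R) (MvPowerSeries σ R)}
    (h : ∀ i, D₁ (X i) = D₂ (X i)) : D₁ = D₂ :=
  sub_eq_zero.mp <| derivation_eq_zero_of_forall_X fun i => by
    rw [Derivation.coe_sub, Pi.sub_apply, h, sub_self]

theorem derivation_apply_eq_sum_pderiv [Fintype σ]
    (D : Derivation R (MvPowerSeries σ R) (MvPowerSeries σ R)) (f : MvPowerSeries σ R) :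
    D f = ∑ i, D (X i) * pderiv R i f := by
  classical
  have hD : D = ∑ i, D (X i) • pderiv R i := derivation_ext fun j => by
    rw [Derivation.sum_apply, Finset.sum_eq_single j]
    · simp
    · intro i _ hij
      simp [pderiv_X_of_ne (Ne.symm hij)]
    · simp
  conv_lhs => rw [hD]
  simp [Derivation.sum_apply]

end MvPowerSeries

theorem pd_eq_pderiv {n : ℕ} (j : Fin n) (f : MvPowerSeries (Fin n) ℂ) :
    pd j f = MvPowerSeries.pderiv ℂ j f := by
  ext d
  rw [MvPowerSeries.coeff_pderiv]
  show ((d j + 1 : ℕ) : ℂ) * _ = _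
  push_cast
  ring

theorem Tj_le_iff {n : ℕ} {f : MvPowerSeries (Fin n) ℂ} {I : Ideal (MvPowerSeries (Fin n) ℂ)} :
    Tj f ≤ I ↔ f ∈ I ∧ ∀ j, pd j f ∈ I := by
  rw [Tj, Ideal.span_le, Set.union_subset_iff, Set.singleton_subset_iff, Set.range_subset_iff]
  rfl

/-- coordinate-free description of `Δ(I)`. -/
theorem stmt_2 {n : ℕ} (I : Ideal (MvPowerSeries (Fin n) ℂ)) :
    Del I = {f : MvPowerSeries (Fin n) ℂ | f ∈ I ∧
      ∀ δ : Derivation ℂ (MvPowerSeries (Fin n) ℂ) (MvPowerSeries (Fin n) ℂ), δ f ∈ I} := by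
  ext f
  simp only [Del, Set.mem_ofPred_eq, Tj_le_iff, pd_eq_pderiv]
  refine and_congr_right fun _ => ⟨fun hpd δ => ?_, fun hδ j => hδ _⟩
  rw [MvPowerSeries.derivation_apply_eq_sum_pderiv δ f]
  exact Ideal.sum_mem _ fun j _ => Ideal.mul_mem_left _ _ (hpd j)
end

section
/- Let I = (f₁,…,f_s) ⊆ R, and let M ⊆ R^s be the R-submodule M = { (a₁,…,a_s) ∈ R^s : Σ_{k=1}^s a_k · ∂f_k/∂x_j ∈ I for every j = 1,…,n }. Then an element g ∈ R belongs to Δ(I) if and only if there exists (a₁,…,a_s) ∈ M with g = Σ_{k=1}^s a_k f_k. Consequently, if m̲₁,…,m̲_q generate M as an R-module, then Δ(I) is generated by the elements Σ_{k=1}^s m_{k,i} f_k for i = 1,…,q. -/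
/-!
Each `∂ⱼ` is a derivation, so for `g = Σ aₖ fₖ` the Leibniz rule gives
`∂ⱼ g ≡ Σ aₖ ∂ⱼfₖ` modulo `I = (f₁,…,f_s)`; hence `g ∈ Δ(I)` exactly when some (equivalently
every) coefficient vector `a` of `g` lies in `M`. The generators of `Δ(I)` are then the images
of generators of `M` under the linear map `a ↦ Σ aₖ fₖ`.
-/

section Derivation

variable {S A ι κ : Type*} [CommSemiring S] [CommRing A] [Algebra S A] [Fintype ι]

theorem Derivation.apply_sum_mul_mem_iff (D : Derivation S A A) {I : Ideal A} {f : ι → A}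
    (hf : ∀ k, f k ∈ I) (a : ι → A) :
    D (∑ k, a k * f k) ∈ I ↔ ∑ k, a k * D (f k) ∈ I := by
  have hrest : ∑ k, f k • D (a k) ∈ I :=
    Ideal.sum_mem I fun k _ => Ideal.mul_mem_right _ I (hf k)
  simp only [map_sum, Derivation.leibniz, Finset.sum_add_distrib, smul_eq_mul] at hrest ⊢
  exact Ideal.add_mem_iff_left I hrest

theorem mem_span_and_derivation_mem_iff (D : κ → Derivation S A A) (f : ι → A) (g : A) :
    (g ∈ Ideal.span (Set.range f) ∧ ∀ j, D j g ∈ Ideal.span (Set.range f)) ↔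
      ∃ a : ι → A, (∀ j, ∑ k, a k * D j (f k) ∈ Ideal.span (Set.range f)) ∧
        g = ∑ k, a k * f k := by
  have hf : ∀ k, f k ∈ Ideal.span (Set.range f) := fun k => Ideal.subset_span ⟨k, rfl⟩
  constructor
  · rintro ⟨hg, hDg⟩
    obtain ⟨a, rfl⟩ := Ideal.mem_span_range_iff_exists_fun.mp hg
    exact ⟨a, fun j => ((D j).apply_sum_mul_mem_iff hf a).mp (hDg j), rfl⟩
  · rintro ⟨a, ha, rfl⟩
    exact ⟨Ideal.sum_mem _ fun k _ => Ideal.mul_mem_left _ _ (hf k),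
      fun j => ((D j).apply_sum_mul_mem_iff hf a).mpr (ha j)⟩

end Derivation

theorem image_sum_mul_span_eq_span {A ι κ : Type*} [CommRing A] [Fintype ι] [Fintype κ]
    (f : ι → A) (m : κ → ι → A) :
    (fun a => ∑ k, a k * f k) '' (Submodule.span A (Set.range m) : Set (ι → A)) =
      Ideal.span (Set.range fun i => ∑ k, m i k * f k) := by
  have h := Submodule.map_span (Fintype.linearCombination A f) (Set.range m)
  rw [← Set.range_comp] at h
  exact congrArg SetLike.coe h

theorem mem_Del_iff {n : ℕ} (I : Ideal (MvPowerSeries (Fin n) ℂ)) (g : MvPowerSeries (Fin n) ℂ) :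
    g ∈ Del I ↔ g ∈ I ∧ ∀ j, MvPowerSeries.pderiv ℂ j g ∈ I := by
  simp only [Del, Tj, Set.mem_ofPred_eq, Ideal.span_le, Set.union_subset_iff,
    Set.singleton_subset_iff, Set.range_subset_iff, SetLike.mem_coe, pd_eq_pderiv]

/-- computation of `Δ(I)` from generators `I = (f₁,…,f_s)` via the module
`M = {a ∈ R^s : Σ aₖ ∂fₖ/∂xⱼ ∈ I for all j}`. -/
theorem stmt_11 {n s : ℕ} (f : Fin s → MvPowerSeries (Fin n) ℂ)
    (I : Ideal (MvPowerSeries (Fin n) ℂ)) (hI : I = Ideal.span (Set.range f))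
    (M : Submodule (MvPowerSeries (Fin n) ℂ) (Fin s → MvPowerSeries (Fin n) ℂ))
    (hM : (M : Set (Fin s → MvPowerSeries (Fin n) ℂ)) =
      {a | ∀ j : Fin n, (∑ k, a k * pd j (f k)) ∈ I}) :
    (∀ g : MvPowerSeries (Fin n) ℂ, g ∈ Del I ↔ ∃ a ∈ M, g = ∑ k, a k * f k) ∧
    (∀ (q : ℕ) (m : Fin q → (Fin s → MvPowerSeries (Fin n) ℂ)),
      Submodule.span (MvPowerSeries (Fin n) ℂ) (Set.range m) = M →
      Del I = ↑(Ideal.span (Set.range fun i => ∑ k, m i k * f k))) := by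
  subst hI
  have hMmem : ∀ a, a ∈ M ↔ ∀ j, ∑ k, a k * pd j (f k) ∈ Ideal.span (Set.range f) :=
    fun a => Set.ext_iff.mp hM a
  have hDel : ∀ g, g ∈ Del (Ideal.span (Set.range f)) ↔ ∃ a ∈ M, g = ∑ k, a k * f k := by
    intro g
    simp only [mem_Del_iff, hMmem, pd_eq_pderiv]
    exact mem_span_and_derivation_mem_iff (fun j => MvPowerSeries.pderiv ℂ j) f g
  refine ⟨hDel, fun q m hm => ?_⟩
  rw [← image_sum_mul_span_eq_span, hm]
  ext g
  simp only [hDel, Set.mem_image, SetLike.mem_coe, eq_comm]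
end

section
/- Let n ≥ 2 and let I ⊆ R be a nontrivial principal ideal (I ≠ (0), I ≠ R). Then I is a Tjurina ideal if and only if I is T-full, i.e. I = T(Δ(I)). -/
/-!
In a local ring, if a principal ideal `(g)` is the sum of ideals `Jᵢ ⊆ (g)`, then by Nakayama
some `Jᵢ` is not contained in `g 𝔪`; an element of it not in `g 𝔪` is `g` times a unit, so
`Jᵢ = (g)`. Since `T(Δ(I))` is the sum of the Tjurina ideals `T(f)` with `T(f) ⊆ I`, a T-full
principal ideal is one of them (the sum is nonempty since `0 ∈ Δ(I)`).
-/

namespace IsLocalRing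

variable {R : Type*} [CommRing R] [IsLocalRing R]

theorem span_singleton_eq_of_notMem_mul_maximalIdeal {g s : R} (hs : s ∈ Ideal.span {g})
    (hs' : s ∉ Ideal.span {g} * maximalIdeal R) : Ideal.span {s} = Ideal.span {g} := by
  obtain ⟨c, rfl⟩ := Ideal.mem_span_singleton'.mp hs
  have hc : IsUnit c := notMem_maximalIdeal.mp fun hc =>
    hs' (mul_comm g c ▸ Ideal.mul_mem_mul (Ideal.mem_span_singleton_self g) hc)
  rw [mul_comm, Ideal.span_singleton_mul_right_unit hc]

theorem exists_eq_of_iSup_eq_of_isPrincipal {ι : Type*} [Nonempty ι] {I : Ideal R}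
    (hI : I.IsPrincipal) {J : ι → Ideal R} (hJ : ⨆ i, J i = I) : ∃ i, J i = I := by
  obtain ⟨g, hg⟩ := hI
  have hg : I = Ideal.span {g} := hg
  by_contra! hne
  have hJle : ∀ i, J i ≤ Ideal.span {g} * maximalIdeal R := fun i s hs => by
    by_contra hs'
    have hsI : s ∈ I := hJ ▸ Ideal.mem_iSup_of_mem i hs
    refine hne i (le_antisymm (hJ ▸ le_iSup J i) ?_)
    rw [hg, ← span_singleton_eq_of_notMem_mul_maximalIdeal (hg ▸ hsI) hs',
      Ideal.span_singleton_le_iff_mem]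
    exact hs
  have hbot : I = ⊥ := by
    refine Submodule.eq_bot_of_le_smul_of_le_jacobson_bot (maximalIdeal R) _
      (hg ▸ Submodule.fg_span_singleton g) ?_ (maximalIdeal_le_jacobson ⊥)
    calc I = ⨆ i, J i := hJ.symm
      _ ≤ Ideal.span {g} * maximalIdeal R := iSup_le hJle
      _ = maximalIdeal R • I := by rw [hg, smul_eq_mul, mul_comm]
  obtain ⟨i⟩ := ‹Nonempty ι›
  exact hne i (le_antisymm (hJ ▸ le_iSup J i) (hbot ▸ bot_le))

end IsLocalRing

section Tjurina

variable {n : ℕ}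

theorem self_mem_Tj (f : MvPowerSeries (Fin n) ℂ) : f ∈ Tj f :=
  Ideal.subset_span (Or.inl rfl)

theorem pd_mem_Tj (j : Fin n) (f : MvPowerSeries (Fin n) ℂ) : pd j f ∈ Tj f :=
  Ideal.subset_span (Or.inr ⟨j, rfl⟩)

theorem pd_zero (j : Fin n) : pd j 0 = 0 := by
  ext d
  exact mul_eq_zero_of_right _ (map_zero _)

theorem Tj_zero : Tj (0 : MvPowerSeries (Fin n) ℂ) = ⊥ := by
  simp [Tj, pd_zero]

theorem zero_mem_Del (I : Ideal (MvPowerSeries (Fin n) ℂ)) : 0 ∈ Del I := by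
  simp [Del, Tj_zero]

theorem Tset_eq_iSup_Tj (A : Set (MvPowerSeries (Fin n) ℂ)) : Tset A = ⨆ f : A, Tj f.1 := by
  refine le_antisymm (Ideal.span_le.mpr ?_) (iSup_le fun f => Ideal.span_le.mpr ?_)
  · rintro w (hw | ⟨f, hf, j, rfl⟩)
    · exact le_iSup (fun f : A => Tj f.1) ⟨w, hw⟩ (self_mem_Tj w)
    · exact le_iSup (fun f : A => Tj f.1) ⟨f, hf⟩ (pd_mem_Tj j f)
  · rintro w (hw | ⟨j, rfl⟩)
    · exact Ideal.subset_span (Or.inl (Set.mem_singleton_iff.mp hw ▸ f.2))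
    · exact Ideal.subset_span (Or.inr ⟨f, f.2, j, rfl⟩)

theorem Tj_le_Tset {A : Set (MvPowerSeries (Fin n) ℂ)} {f : MvPowerSeries (Fin n) ℂ}
    (hf : f ∈ A) : Tj f ≤ Tset A :=
  Tset_eq_iSup_Tj A ▸ le_iSup (fun g : A => Tj g.1) ⟨f, hf⟩

theorem Tset_Del_le (I : Ideal (MvPowerSeries (Fin n) ℂ)) : Tset (Del I) ≤ I :=
  Tset_eq_iSup_Tj (Del I) ▸ iSup_le fun f => f.2

end Tjurina

theorem stmt_14_general {n : ℕ} (I : Ideal (MvPowerSeries (Fin n) ℂ))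
    (hp : I.IsPrincipal) :
    (∃ f : MvPowerSeries (Fin n) ℂ, I = Tj f) ↔ I = Tset (Del I) := by
  constructor
  · rintro ⟨f, rfl⟩
    exact le_antisymm (Tj_le_Tset (le_refl (Tj f))) (Tset_Del_le _)
  · intro hT
    have : Nonempty (Del I) := ⟨⟨0, zero_mem_Del I⟩⟩
    obtain ⟨⟨f, _⟩, hf⟩ :=
      IsLocalRing.exists_eq_of_iSup_eq_of_isPrincipal hp (Tset_eq_iSup_Tj (Del I) ▸ hT.symm)
    exact ⟨f, hf.symm⟩

/-- for `n ≥ 2` and a nontrivial principal ideal `I`, `I` is a Tjurina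
ideal iff `I` is T-full, i.e. `I = T(Δ(I))`. -/
theorem stmt_14 {n : ℕ} (hn : 2 ≤ n) (I : Ideal (MvPowerSeries (Fin n) ℂ))
    (hb : I ≠ ⊥) (ht : I ≠ ⊤) (hp : I.IsPrincipal) :
    (∃ f : MvPowerSeries (Fin n) ℂ, I = Tj f) ↔ I = Tset (Del I) :=
  stmt_14_general I hp
end
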